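/- arXiv:1503.04300 — 4 statements merged into one kernel-verified Lean document; each statement's English description precedes it below -/
import Mathlib

section
/- Let A be a continuous linear map from ℝ^n to ℝ^k with n ≥ k. Then inf over unit functionals φ of ‖A* φ‖ equals inf of ‖A v‖ over unit vectors v orthogonal to ker A (with the convention that the latter infimum is taken over the orthogonal complement of the kernel intersected with the unit sphere, and equals 0 if A is not surjective). -/
open Classical

noncomputable def rabier {n k : ℕ}
    (A : EuclideanSpace ℝ (Fin n) →L[ℝ] EuclideanSpace ℝ (Fin k)) : ℝ :=
  sInf {r : ℝ | ∃ φ : EuclideanSpace ℝ (Fin k), ‖φ‖ = 1 ∧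
    r = ‖ContinuousLinearMap.adjoint A φ‖}

/-! If `v = A†ψ` then `‖v‖² = ⟪ψ, A v⟫ ≤ ‖ψ‖ ‖A v‖`, so a lower bound `c ‖ψ‖ ≤ ‖A†ψ‖` transfers to
`c ‖v‖ ≤ ‖A v‖` on `range A† = (ker A)ᗮ`. Symmetrically, a surjective `A` maps `(ker A)ᗮ` onto the
target, so a lower bound for `A` on `(ker A)ᗮ` transfers to `A†`. If `A` is not surjective, `A†`
kills a unit vector of `(range A)ᗮ`. -/

open scoped InnerProduct

namespace ContinuousLinearMap

section Normed

variable {E F : Type*} [NormedAddCommGroup E] [NormedSpace ℝ E]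
  [NormedAddCommGroup F] [NormedSpace ℝ F]

noncomputable def infNormOn (f : E →L[ℝ] F) (K : Submodule ℝ E) : ℝ :=
  sInf {r | ∃ v ∈ K, ‖v‖ = 1 ∧ r = ‖f v‖}

variable {f : E →L[ℝ] F} {K : Submodule ℝ E}

theorem infNormOn_nonneg : 0 ≤ f.infNormOn K :=
  Real.sInf_nonneg (by rintro _ ⟨v, -, -, rfl⟩; positivity)

@[simp]
theorem infNormOn_bot : f.infNormOn ⊥ = 0 := by
  have : {r | ∃ v ∈ (⊥ : Submodule ℝ E), ‖v‖ = 1 ∧ r = ‖f v‖} = ∅ := by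
    ext r; simp
  rw [infNormOn, this, Real.sInf_empty]

theorem infNormOn_mul_norm_le {x : E} (hx : x ∈ K) : f.infNormOn K * ‖x‖ ≤ ‖f x‖ := by
  rcases eq_or_ne x 0 with rfl | hx0
  · simp
  have hnorm : 0 < ‖x‖ := norm_pos_iff.mpr hx0
  have hle : f.infNormOn K ≤ ‖f (‖x‖⁻¹ • x)‖ :=
    csInf_le ⟨0, by rintro _ ⟨v, -, -, rfl⟩; positivity⟩
      ⟨‖x‖⁻¹ • x, K.smul_mem _ hx, norm_smul_inv_norm hx0, rfl⟩
  rw [map_smul, norm_smul, norm_inv, norm_norm] at hle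
  rwa [← le_div_iff₀ hnorm, div_eq_inv_mul]

theorem le_infNormOn {c : ℝ} (hK : K ≠ ⊥) (h : ∀ x ∈ K, c * ‖x‖ ≤ ‖f x‖) :
    c ≤ f.infNormOn K := by
  obtain ⟨x, hxK, hx0⟩ := K.ne_bot_iff.mp hK
  refine le_csInf ⟨_, ‖x‖⁻¹ • x, K.smul_mem _ hxK, norm_smul_inv_norm hx0, rfl⟩ ?_
  rintro _ ⟨v, hvK, hv, rfl⟩
  simpa [hv] using h v hvK

theorem infNormOn_eq_zero_of_apply_eq_zero {x : E} (hx : x ∈ K) (hx0 : x ≠ 0) (hfx : f x = 0) :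
    f.infNormOn K = 0 := by
  have := infNormOn_mul_norm_le (f := f) hx
  rw [hfx, norm_zero] at this
  exact le_antisymm (nonpos_of_mul_nonpos_left this (norm_pos_iff.mpr hx0)) infNormOn_nonneg

end Normed

section InnerProduct

variable {E F : Type*} [NormedAddCommGroup E] [InnerProductSpace ℝ E]
  [NormedAddCommGroup F] [InnerProductSpace ℝ F]

theorem mul_norm_apply_le_norm_adjoint_apply_apply [CompleteSpace E] [CompleteSpace F]
    (T : E →L[ℝ] F) {c : ℝ} (hc : 0 ≤ c) {x : E} (hx : c * ‖x‖ ≤ ‖T x‖) :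
    c * ‖T x‖ ≤ ‖(T†) (T x)‖ := by
  have hsq : ‖T x‖ ^ 2 ≤ ‖(T†) (T x)‖ * ‖x‖ := by
    rw [← real_inner_self_eq_norm_sq, ← adjoint_inner_left]
    exact real_inner_le_norm _ _
  rcases (norm_nonneg (T x)).eq_or_lt with h0 | hpos
  · rw [← h0, mul_zero]; positivity
  · refine le_of_mul_le_mul_right ?_ hpos
    nlinarith [norm_nonneg ((T†) (T x))]

variable [FiniteDimensional ℝ E] [FiniteDimensional ℝ F]

theorem infNormOn_adjoint_top_eq_zero {T : E →L[ℝ] F} (hT : ¬Function.Surjective T) :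
    (T†).infNormOn ⊤ = 0 := by
  have hrange : (LinearMap.range (T : E →ₗ[ℝ] F))ᗮ ≠ ⊥ := by
    rwa [Ne, Submodule.orthogonal_eq_bot_iff, LinearMap.range_eq_top]
  obtain ⟨φ, hφ, hφ0⟩ := Submodule.ne_bot_iff _ |>.mp hrange
  rw [orthogonal_range] at hφ
  exact infNormOn_eq_zero_of_apply_eq_zero Submodule.mem_top hφ0 hφ

theorem infNormOn_adjoint_top_eq_infNormOn_orthogonal_ker {T : E →L[ℝ] F}
    (hT : Function.Surjective T) :
    (T†).infNormOn ⊤ = T.infNormOn (LinearMap.ker (T : E →ₗ[ℝ] F))ᗮ := by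
  set K := LinearMap.ker (T : E →ₗ[ℝ] F)
  rcases subsingleton_or_nontrivial F with hF | hF
  · have hK : K = ⊤ := LinearMap.ker_eq_top.mpr (Subsingleton.elim _ _)
    rw [hK, Submodule.top_orthogonal_eq_bot, Subsingleton.elim (⊤ : Submodule ℝ F) ⊥,
      infNormOn_bot, infNormOn_bot]
  have hK : Kᗮ ≠ ⊥ := by
    rw [Ne, Submodule.orthogonal_eq_bot_iff, LinearMap.ker_eq_top]
    rintro hT0
    obtain ⟨φ, hφ⟩ := exists_ne (0 : F)
    obtain ⟨u, rfl⟩ := hT φ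
    exact hφ (by simp [← coe_coe, hT0])
  apply le_antisymm
  · refine le_infNormOn hK fun v hv ↦ ?_
    rw [orthogonal_ker, Submodule.topologicalClosure_eq_self] at hv
    obtain ⟨ψ, rfl⟩ := hv
    simpa using mul_norm_apply_le_norm_adjoint_apply_apply (T†) infNormOn_nonneg
      (infNormOn_mul_norm_le (Submodule.mem_top (x := ψ)))
  · refine le_infNormOn top_ne_bot fun φ _ ↦ ?_
    obtain ⟨u, rfl⟩ := hT φ
    obtain ⟨y, hy, z, hz, rfl⟩ := K.exists_add_mem_mem_orthogonal u
    rw [map_add, show T y = 0 from hy, zero_add]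
    exact mul_norm_apply_le_norm_adjoint_apply_apply T infNormOn_nonneg
      (infNormOn_mul_norm_le hz)

end InnerProduct

end ContinuousLinearMap

open ContinuousLinearMap

theorem rabier_eq_infNormOn_adjoint_top {n k : ℕ}
    (A : EuclideanSpace ℝ (Fin n) →L[ℝ] EuclideanSpace ℝ (Fin k)) :
    rabier A = (A†).infNormOn ⊤ := by
  simp [rabier, infNormOn]

theorem rabier_eq_inf_on_orthogonal_of_ker_general (n k : ℕ)
    (A : EuclideanSpace ℝ (Fin n) →L[ℝ] EuclideanSpace ℝ (Fin k)) :
    rabier A =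
      if Function.Surjective A then
        sInf {r : ℝ | ∃ v : EuclideanSpace ℝ (Fin n),
          v ∈ (LinearMap.ker (A : EuclideanSpace ℝ (Fin n) →ₗ[ℝ] EuclideanSpace ℝ (Fin k)))ᗮ ∧ ‖v‖ = 1 ∧ r = ‖A v‖}
      else 0 := by
  rw [rabier_eq_infNormOn_adjoint_top]
  split_ifs with hA
  · exact infNormOn_adjoint_top_eq_infNormOn_orthogonal_ker hA
  · exact infNormOn_adjoint_top_eq_zero hA

/-- For a linear map `A : ℝ^n → ℝ^k` with `n ≥ k`, the Rabier function equals the infimum of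
`‖A v‖` over unit vectors `v` orthogonal to `ker A` when `A` is surjective, and equals `0`
when `A` is not surjective. -/
theorem rabier_eq_inf_on_orthogonal_of_ker (n k : ℕ) (hnk : n ≥ k)
    (A : EuclideanSpace ℝ (Fin n) →L[ℝ] EuclideanSpace ℝ (Fin k)) :
    rabier A =
      if Function.Surjective A then
        sInf {r : ℝ | ∃ v : EuclideanSpace ℝ (Fin n),
          v ∈ (LinearMap.ker (A : EuclideanSpace ℝ (Fin n) →ₗ[ℝ] EuclideanSpace ℝ (Fin k)))ᗮ ∧ ‖v‖ = 1 ∧ r = ‖A v‖}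
      else 0 :=
  rabier_eq_inf_on_orthogonal_of_ker_general n k A
end

section
/- Let X ⊆ ℝ^n be the graph of a C-Lipschitz function ξ : B → ℝ on B ⊆ ℝ^{n-1}, C a natural number, let z > 0, and let M be a real number with M ≥ 4(C+1). Then for every a ∈ ℝ^n there exists b in the closed ball of center a and radius M²·z such that the open ball of center b and radius M·z is disjoint from X. -/
/-!
Move from `a` vertically by `±M²z`. The two open balls of radius `Mz` around these points are
`2Mz` apart horizontally but more than `2M²z - 2Mz` apart vertically; a `C`-Lipschitz graph
meeting both would climb more than `2M²z - 2Mz` over a horizontal distance less than `2Mz`,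
forcing `M < C + 1`. So one of the two balls misses the graph.
-/

/-- The projection `ℝ^{n+1} → ℝ^n` forgetting the last coordinate. -/
noncomputable def projFirst (n : ℕ) (p : EuclideanSpace ℝ (Fin (n + 1))) :
    EuclideanSpace ℝ (Fin n) :=
  WithLp.toLp 2 (fun i => p i.castSucc)

open Metric

def graphOn (n : ℕ) (B : Set (EuclideanSpace ℝ (Fin n))) (ξ : EuclideanSpace ℝ (Fin n) → ℝ) :
    Set (EuclideanSpace ℝ (Fin (n + 1))) :=
  {p | projFirst n p ∈ B ∧ p (Fin.last n) = ξ (projFirst n p)}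

lemma dist_projFirst_le {n : ℕ} (p q : EuclideanSpace ℝ (Fin (n + 1))) :
    dist (projFirst n p) (projFirst n q) ≤ dist p q := by
  rw [EuclideanSpace.dist_eq, EuclideanSpace.dist_eq, Fin.sum_univ_castSucc]
  exact Real.sqrt_le_sqrt (le_add_of_nonneg_right (sq_nonneg _))

@[simp]
lemma projFirst_add_single_last {n : ℕ} (p : EuclideanSpace ℝ (Fin (n + 1))) (t : ℝ) :
    projFirst n (p + EuclideanSpace.single (Fin.last n) t) = projFirst n p := by
  ext i
  simp [projFirst]

lemma abs_sub_last_le_of_mem_graphOn {n : ℕ} {B : Set (EuclideanSpace ℝ (Fin n))}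
    {ξ : EuclideanSpace ℝ (Fin n) → ℝ} {C : ℝ}
    (hξ : ∀ x ∈ B, ∀ y ∈ B, |ξ x - ξ y| ≤ C * ‖x - y‖)
    {p q : EuclideanSpace ℝ (Fin (n + 1))} (hp : p ∈ graphOn n B ξ) (hq : q ∈ graphOn n B ξ) :
    |p (Fin.last n) - q (Fin.last n)| ≤ C * dist (projFirst n p) (projFirst n q) := by
  rw [hp.2, hq.2, dist_eq_norm]
  exact hξ _ hp.1 _ hq.1

lemma ball_inter_graphOn_eq_empty_of_nonempty {n : ℕ} {B : Set (EuclideanSpace ℝ (Fin n))}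
    {ξ : EuclideanSpace ℝ (Fin n) → ℝ} {C r t : ℝ} (hC : 0 ≤ C) (ht : (C + 1) * r ≤ t)
    (hξ : ∀ x ∈ B, ∀ y ∈ B, |ξ x - ξ y| ≤ C * ‖x - y‖) (c : EuclideanSpace ℝ (Fin (n + 1)))
    (hup : (ball (c + EuclideanSpace.single (Fin.last n) t) r ∩ graphOn n B ξ).Nonempty) :
    ball (c + EuclideanSpace.single (Fin.last n) (-t)) r ∩ graphOn n B ξ = ∅ := by
  obtain ⟨p, hpc, hpX⟩ := hup
  refine Set.eq_empty_iff_forall_notMem.2 fun q ⟨hqc, hqX⟩ => ?_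
  rw [mem_ball] at hpc hqc
  have horizontal : dist (projFirst n p) (projFirst n q) < 2 * r := by
    have hp := (dist_projFirst_le _ _).trans_lt hpc
    have hq := (dist_projFirst_le _ _).trans_lt hqc
    simp only [projFirst_add_single_last] at hp hq
    linarith [dist_triangle_right (projFirst n p) (projFirst n q) (projFirst n c)]
  have vertical : 2 * t - 2 * r < p (Fin.last n) - q (Fin.last n) := by
    have hp := (PiLp.dist_apply_le _ _ (Fin.last n)).trans_lt hpc
    have hq := (PiLp.dist_apply_le _ _ (Fin.last n)).trans_lt hqc
    simp only [PiLp.add_apply, PiLp.single_apply, if_true, Real.dist_eq, abs_lt] at hp hq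
    linarith
  have slope := (le_abs_self _).trans (abs_sub_last_le_of_mem_graphOn hξ hpX hqX)
  linarith [mul_le_mul_of_nonneg_left horizontal.le hC]

/-- If `X ⊆ ℝ^{n+1}` is the graph of a `C`-Lipschitz function (`C ∈ ℕ`), `z > 0` and
`M ≥ 4(C+1)`, then for every `a` there is `b` in the closed ball of center `a` and radius
`M²·z` such that the open ball of center `b` and radius `M·z` is disjoint from `X`. -/
theorem exists_ball_disjoint_graph (n : ℕ) (C : ℕ) (z M : ℝ) (hz : 0 < z)
    (hM : M ≥ 4 * ((C : ℝ) + 1))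
    (B : Set (EuclideanSpace ℝ (Fin n))) (ξ : EuclideanSpace ℝ (Fin n) → ℝ)
    (hξ : ∀ x ∈ B, ∀ y ∈ B, |ξ x - ξ y| ≤ (C : ℝ) * ‖x - y‖)
    (X : Set (EuclideanSpace ℝ (Fin (n + 1))))
    (hX : X = {p | projFirst n p ∈ B ∧ p (Fin.last n) = ξ (projFirst n p)})
    (a : EuclideanSpace ℝ (Fin (n + 1))) :
    ∃ b ∈ Metric.closedBall a (M ^ 2 * z), Metric.ball b (M * z) ∩ X = ∅ := by
  have hC : (0 : ℝ) ≤ C := C.cast_nonneg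
  have hMz : ((C : ℝ) + 1) * (M * z) ≤ M ^ 2 * z :=
    calc ((C : ℝ) + 1) * (M * z) ≤ M * (M * z) :=
          mul_le_mul_of_nonneg_right (by linarith) (mul_nonneg (by linarith) hz.le)
      _ = M ^ 2 * z := by ring
  have hshift : ∀ t : ℝ, |t| = M ^ 2 * z →
      a + EuclideanSpace.single (Fin.last n) t ∈ closedBall a (M ^ 2 * z) := by
    intro t ht
    rw [mem_closedBall, dist_eq_norm, add_sub_cancel_left, PiLp.norm_single, Real.norm_eq_abs, ht]
  have hM2z : |M ^ 2 * z| = M ^ 2 * z := abs_of_nonneg (by positivity)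
  subst hX
  by_cases hup : ball (a + EuclideanSpace.single (Fin.last n) (M ^ 2 * z)) (M * z) ∩
      graphOn n B ξ = ∅
  · exact ⟨_, hshift _ hM2z, hup⟩
  · exact ⟨_, hshift _ (by rw [abs_neg, hM2z]),
      ball_inter_graphOn_eq_empty_of_nonempty hC hMz hξ a (Set.nonempty_iff_ne_empty.2 hup)⟩
end

section
/- Let Γ be a C¹ submanifold of ℝ^{n+k}, x ∈ Γ, and let π : ℝ^{n+k} → ℝ^k be the projection onto the last k coordinates. Let w be a unit vector in T_xΓ maximizing ‖π(w)‖ over unit vectors of T_xΓ, let b = ‖π(w)‖, and assume b > 0 and ‖e_k − π(w)/‖π(w)‖‖ < ε for the last canonical basis vector e_k of ℝ^k, with 0 < ε < 1. Let Δ_x = {u ∈ T_xΓ : ⟨u, e_{n+k}⟩ = 0} where e_{n+k} is the last canonical basis vector of ℝ^{n+k}. Then d(w, Δ_x) ≥ 1 − ε. -/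
/-!
The maximality of `w` makes it an eigenvector of `π*π` on the tangent space: for every tangent
vector `v`, `⟪π w, π v⟫ = b² ⟪w, v⟫`. If `u ∈ Δ_x` then `π u ⊥ e_k`, so
`b² |⟪w, u⟫| = |⟪π w - b e_k, π u⟫| ≤ b ε · b ‖u‖`, i.e. `|⟪w, u⟫| ≤ ε ‖u‖`. Expanding
`‖w - u‖² = 1 - 2 ⟪w, u⟫ + ‖u‖²` then gives `‖w - u‖ ≥ 1 - ε`.
-/

open RealInnerProductSpace

section

variable {E F : Type*} [NormedAddCommGroup E] [InnerProductSpace ℝ E]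
  [NormedAddCommGroup F] [InnerProductSpace ℝ F]

theorem Submodule.norm_apply_le_of_forall_norm_eq_one (P : E →L[ℝ] F) (T : Submodule ℝ E)
    {c : ℝ} (hc : 0 ≤ c) (h : ∀ u ∈ T, ‖u‖ = 1 → ‖P u‖ ≤ c) {v : E} (hv : v ∈ T) :
    ‖P v‖ ≤ c * ‖v‖ :=
  (P ∘L T.subtypeL).le_of_opNorm_le
    (ContinuousLinearMap.opNorm_le_of_unit_norm hc fun u hu ↦ h u u.2 hu) ⟨v, hv⟩

/-- The quadratic form `Q v = c² ‖v‖² - ‖P v‖²` is nonnegative on `T` and vanishes at `w`, so the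
discriminant of `t ↦ Q (w + t v)`, which is `4 (c² ⟪w, v⟫ - ⟪P w, P v⟫)²`, is nonpositive. -/
theorem Submodule.inner_apply_apply_eq_of_norm_apply_eq (P : E →ₗ[ℝ] F) (T : Submodule ℝ E)
    {c : ℝ} (hbound : ∀ v ∈ T, ‖P v‖ ≤ c * ‖v‖) {w : E} (hw : w ∈ T)
    (hattain : ‖P w‖ = c * ‖w‖) {v : E} (hv : v ∈ T) : ⟪P w, P v⟫ = c ^ 2 * ⟪w, v⟫ := by
  have hquad : ∀ t : ℝ, 0 ≤ (c ^ 2 * ‖v‖ ^ 2 - ‖P v‖ ^ 2) * (t * t)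
      + 2 * (c ^ 2 * ⟪w, v⟫ - ⟪P w, P v⟫) * t + 0 := by
    intro t
    have hsq := pow_le_pow_left₀ (norm_nonneg _)
      (hbound (w + t • v) (T.add_mem hw (T.smul_mem t hv))) 2
    rw [map_add, map_smul, mul_pow, norm_add_sq_real, norm_add_sq_real, norm_smul, norm_smul,
      real_inner_smul_right, real_inner_smul_right, hattain, Real.norm_eq_abs] at hsq
    simp only [mul_pow, sq_abs] at hsq
    linarith
  have hdisc := discrim_le_zero hquad
  rw [discrim] at hdisc
  nlinarith [sq_nonneg (c ^ 2 * ⟪w, v⟫ - ⟪P w, P v⟫)]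

theorem abs_real_inner_le_norm_mul_norm_sub_normalize {x y e : F} (he : ⟪e, y⟫ = 0) :
    |⟪x, y⟫| ≤ ‖x‖ * ‖e - ‖x‖⁻¹ • x‖ * ‖y‖ := by
  obtain rfl | hx := eq_or_ne x 0
  · simp
  calc |⟪x, y⟫| = |⟪‖x‖ • (‖x‖⁻¹ • x - e), y⟫| := by
        rw [smul_sub, smul_inv_smul₀ (norm_ne_zero_iff.2 hx), inner_sub_left,
          real_inner_smul_left, he, mul_zero, sub_zero]
    _ ≤ ‖‖x‖ • (‖x‖⁻¹ • x - e)‖ * ‖y‖ := abs_real_inner_le_norm _ _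
    _ = ‖x‖ * ‖e - ‖x‖⁻¹ • x‖ * ‖y‖ := by rw [norm_smul, norm_norm, norm_sub_rev]

theorem one_sub_le_norm_sub_of_inner_le {w u : F} {ε : ℝ} (hε0 : 0 ≤ ε) (hε1 : ε ≤ 1)
    (hw : ‖w‖ = 1) (hwu : ⟪w, u⟫ ≤ ε * ‖u‖) : 1 - ε ≤ ‖w - u‖ := by
  have hsq : (1 - ε) ^ 2 ≤ ‖w - u‖ ^ 2 := by
    rw [norm_sub_sq_real, hw]
    nlinarith [sq_nonneg (‖u‖ - ε), mul_nonneg hε0 (sub_nonneg.2 hε1)]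
  exact (pow_le_pow_iff_left₀ (sub_nonneg.2 hε1) (norm_nonneg _) two_ne_zero).1 hsq

end

/-- `ℝ^{n+(k+1)}` is modelled as the `ℓ²` product `ℝ^n × ℝ^{k+1}`, so that `π` is the second
projection and the last coordinate is indexed by `Fin.last k`. -/
theorem dist_to_Delta_ge (n k : ℕ) (ε : ℝ) (hε0 : 0 < ε) (hε1 : ε < 1)
    (T : Submodule ℝ (WithLp 2 (EuclideanSpace ℝ (Fin n) × EuclideanSpace ℝ (Fin (k + 1)))))
    (w : WithLp 2 (EuclideanSpace ℝ (Fin n) × EuclideanSpace ℝ (Fin (k + 1))))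
    (hwT : w ∈ T) (hw : ‖w‖ = 1)
    (hmax : ∀ u ∈ T, ‖u‖ = 1 → ‖(WithLp.equiv 2 _ u).2‖ ≤ ‖(WithLp.equiv 2 _ w).2‖)
    (hb : 0 < ‖(WithLp.equiv 2 _ w).2‖)
    (hclose : ‖EuclideanSpace.single (Fin.last k) (1 : ℝ) -
      ‖(WithLp.equiv 2 _ w).2‖⁻¹ • (WithLp.equiv 2 _ w).2‖ < ε) :
    ∀ u ∈ T, (WithLp.equiv 2 _ u).2 (Fin.last k) = 0 → 1 - ε ≤ ‖w - u‖ := by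
  intro u huT hu0
  simp only [WithLp.equiv_apply, WithLp.ofLp_snd] at hmax hb hclose hu0
  set P := WithLp.sndL 2 ℝ (EuclideanSpace ℝ (Fin n)) (EuclideanSpace ℝ (Fin (k + 1)))
  set b := ‖w.snd‖
  have hbound : ∀ v ∈ T, ‖P v‖ ≤ b * ‖v‖ := fun v hv ↦
    T.norm_apply_le_of_forall_norm_eq_one P (norm_nonneg _) hmax hv
  have heigen : ⟪w.snd, u.snd⟫ = b ^ 2 * ⟪w, u⟫ :=
    T.inner_apply_apply_eq_of_norm_apply_eq P.toLinearMap hbound hwT (by rw [hw, mul_one]; rfl) huT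
  have horth : ⟪EuclideanSpace.single (Fin.last k) (1 : ℝ), u.snd⟫ = 0 := by
    rw [EuclideanSpace.inner_single_left, hu0, mul_zero]
  have hinner : b ^ 2 * |⟪w, u⟫| ≤ b ^ 2 * (ε * ‖u‖) :=
    calc b ^ 2 * |⟪w, u⟫| = |⟪w.snd, u.snd⟫| := by
          rw [heigen, abs_mul, abs_of_nonneg (sq_nonneg b)]
      _ ≤ b * ‖EuclideanSpace.single (Fin.last k) (1 : ℝ) - b⁻¹ • w.snd‖ * ‖u.snd‖ :=
          abs_real_inner_le_norm_mul_norm_sub_normalize horth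
      _ ≤ b * ε * (b * ‖u‖) := by gcongr; exact hbound u huT
      _ = b ^ 2 * (ε * ‖u‖) := by ring
  exact one_sub_le_norm_sub_of_inner_le hε0.le hε1.le hw
    (le_of_abs_le (le_of_mul_le_mul_left hinner (by positivity)))
end

section
/- Let v ∈ ℝ^k be a unit vector with ‖e_k − v‖ < ε where e_k is the last canonical basis vector and 0 < ε < 1/4. Let π₂ : ℝ^k → e_k^⊥ be the linear projection onto e_k^⊥ along the line spanned by v. Then the operator norm of π₂ is at most 2. -/
/-!
Let `e` be a unit vector, `δ = ‖v - e‖`, and `y = y' + t • v` with `y' ⊥ e`. Applying the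
orthogonal projection `P` onto `eᗮ`, which fixes `y'` and kills `e`, gives
`y' = P y - t • P (v - e)`, so `‖y'‖ ≤ ‖y‖ + |t| δ`. Pairing with `e` gives `⟪e, y⟫ = t ⟪e, v⟫`
with `⟪e, v⟫ ≥ 1 - δ`, so `|t| (1 - δ) ≤ ‖y‖`. Together `(1 - δ) ‖y'‖ ≤ ‖y‖`, and `δ < 1/4`.
-/

open scoped RealInnerProductSpace

section

variable {E : Type*} [NormedAddCommGroup E] [InnerProductSpace ℝ E] {e y' : E}

theorem norm_le_norm_add_smul_add_abs_mul_norm_sub (hy' : ⟪e, y'⟫ = 0) (t : ℝ) (v : E) :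
    ‖y'‖ ≤ ‖y' + t • v‖ + |t| * ‖v - e‖ := by
  set P := (ℝ ∙ e)ᗮ.starProjection
  have hPy' : P y' = y' := Submodule.starProjection_eq_self_iff.mpr
    (Submodule.mem_orthogonal_singleton_iff_inner_right.mpr hy')
  have hPe : P e = 0 := Submodule.starProjection_orthogonalComplement_singleton_eq_zero e
  have hdecomp : y' = P (y' + t • v) - t • P (v - e) := by
    simp only [map_add, map_sub, map_smul, hPy', hPe, sub_zero, add_sub_cancel_right]
  calc ‖y'‖ = ‖P (y' + t • v) - t • P (v - e)‖ := by rw [← hdecomp]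
    _ ≤ ‖P (y' + t • v)‖ + ‖t • P (v - e)‖ := norm_sub_le _ _
    _ ≤ ‖y' + t • v‖ + |t| * ‖v - e‖ := by
      rw [norm_smul, Real.norm_eq_abs]
      gcongr <;> exact Submodule.norm_starProjection_apply_le _ _

theorem abs_mul_one_sub_norm_sub_le_norm_add_smul (he : ‖e‖ = 1) (hy' : ⟪e, y'⟫ = 0)
    (t : ℝ) (v : E) :
    |t| * (1 - ‖v - e‖) ≤ ‖y' + t • v‖ := by
  have hinner : ⟪e, y' + t • v⟫ = t * ⟪e, v⟫ := by
    rw [inner_add_right, hy', inner_smul_right, zero_add]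
  have hev : 1 - ‖v - e‖ ≤ ⟪e, v⟫ := by
    have h1 : ⟪e, v⟫ = 1 + ⟪e, v - e⟫ := by
      rw [inner_sub_right, real_inner_self_eq_norm_sq, he]; ring
    have h2 : |⟪e, v - e⟫| ≤ ‖v - e‖ := by
      simpa [he] using abs_real_inner_le_norm e (v - e)
    linarith [neg_abs_le ⟪e, v - e⟫]
  calc |t| * (1 - ‖v - e‖) ≤ |t| * |⟪e, v⟫| := by gcongr; exact hev.trans (le_abs_self _)
    _ = |⟪e, y' + t • v⟫| := by rw [hinner, abs_mul]
    _ ≤ ‖y' + t • v‖ := by simpa [he] using abs_real_inner_le_norm e (y' + t • v)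

theorem one_sub_norm_sub_mul_norm_le_norm_add_smul (he : ‖e‖ = 1) (hy' : ⟪e, y'⟫ = 0)
    (t : ℝ) (v : E) :
    (1 - ‖v - e‖) * ‖y'‖ ≤ ‖y' + t • v‖ := by
  have hsplit := norm_le_norm_add_smul_add_abs_mul_norm_sub hy' t v
  have ht := abs_mul_one_sub_norm_sub_le_norm_add_smul he hy' t v
  rcases le_or_gt ‖v - e‖ 1 with hd | hd
  · nlinarith [norm_nonneg (v - e), abs_nonneg t]
  · nlinarith [norm_nonneg y', norm_nonneg (y' + t • v)]

end

theorem proj_along_v_norm_le_two_general (k : ℕ) (ε : ℝ) (hε : ε < 1 / 4)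
    (v : EuclideanSpace ℝ (Fin (k + 1)))
    (hclose : ‖EuclideanSpace.single (Fin.last k) (1 : ℝ) - v‖ < ε) :
    ∀ (y y' : EuclideanSpace ℝ (Fin (k + 1))) (t : ℝ),
      y = y' + t • v → y' (Fin.last k) = 0 → ‖y'‖ ≤ 2 * ‖y‖ := by
  rintro y y' t rfl hy'
  set e := EuclideanSpace.single (Fin.last k) (1 : ℝ)
  have he : ‖e‖ = 1 := by simp [e]
  have hey' : ⟪e, y'⟫ = 0 := by simp [e, EuclideanSpace.inner_single_left, hy']
  have hd : ‖v - e‖ < 1 / 4 := by rw [norm_sub_rev]; linarith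
  have hy : 3 / 4 * ‖y'‖ ≤ ‖y' + t • v‖ :=
    le_trans (by gcongr; linarith) (one_sub_norm_sub_mul_norm_le_norm_add_smul he hey' t v)
  linarith [norm_nonneg y']

/-- Let `v ∈ ℝ^{k+1}` be a unit vector with `‖e_k − v‖ < ε`, `0 < ε < 1/4`, where `e_k` is the
last canonical basis vector. Then the projection `π₂` onto `e_kᗮ` along `span v` has norm at
most `2`: whenever `y = y' + t • v` with the last coordinate of `y'` vanishing,
`‖y'‖ ≤ 2‖y‖`. -/
theorem proj_along_v_norm_le_two (k : ℕ) (ε : ℝ) (hε0 : 0 < ε) (hε : ε < 1 / 4)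
    (v : EuclideanSpace ℝ (Fin (k + 1))) (hv : ‖v‖ = 1)
    (hclose : ‖EuclideanSpace.single (Fin.last k) (1 : ℝ) - v‖ < ε) :
    ∀ (y y' : EuclideanSpace ℝ (Fin (k + 1))) (t : ℝ),
      y = y' + t • v → y' (Fin.last k) = 0 → ‖y'‖ ≤ 2 * ‖y‖ :=
  proj_along_v_norm_le_two_general k ε hε v hclose
end
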